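/- On a quasi-Kähler manifold with Norden metric, the curvature tensors R̃ and R of the associated metric g̃ and of g satisfy R̃(x,y,z,u) = R(x,y,z,Ju) − (∇_x F)(u,y,z) + (∇_y F)(u,x,z) − g((∇_y J)z + (∇_z J)y, (∇_x J)(Ju) + (∇_u J)(Jx)) + g((∇_x J)z + (∇_z J)x, (∇_y J)(Ju) + (∇_u J)(Jy)). -/

import Mathlib

/-!
The associated metric `g̃ = g(·, J·)` is parallel for `∇ + T`: the metric condition for `∇ + T`
reduces to the quasi-Kähler cyclic identity. Since `T` is symmetric, `∇ + T` has the torsion of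
`∇`, which is that of `∇̃`, and Koszul's uniqueness argument (which only needs `2` invertible)
gives `g̃(∇̃_x y, w) = g̃(∇_x y + T(x,y), w)` even though `g̃` need not be nondegenerate. Metric
compatibility of both connections then transfers this to second derivatives, so `R̃` is the
`g̃`-pairing of the curvature of `∇ + T`, which is
`R(x,y)z + (∇_x T)(y,z) - (∇_y T)(x,z) + T(x,T(y,z)) - T(y,T(x,z))`.
Everything is then read off from `g(T(y,z), Jw) = -F(w,y,z)`: differentiated it turns `∇T` into
`∇F`, and applied to `T(x,T(y,z))` it gives the quadratic terms.
-/

def AddMonoidHom.mk₂ {M N P : Type*} [AddGroup M] [AddGroup N] [AddCommGroup P] (f : M → N → P)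
    (h₁ : ∀ a b c, f (a + b) c = f a c + f b c) (h₂ : ∀ a b c, f a (b + c) = f a b + f a c) :
    M →+ N →+ P :=
  AddMonoidHom.mk' (fun a => AddMonoidHom.mk' (f a) (h₂ a)) fun a b => AddMonoidHom.ext (h₁ a b)

section Koszul

variable {α R V : Type*} [CommRing R] [AddCommGroup V]

theorem eq_zero_of_symm_of_antisymm (h2 : IsUnit (2 : R)) {s : α → α → α → R}
    (hsymm : ∀ x y w, s x y w = s y x w) (hanti : ∀ x y w, s x y w = -s x w y) (x y w : α) :
    s x y w = 0 := by
  have hneg : s x y w = -s x y w :=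
    calc s x y w = -s x w y := hanti x y w
      _ = -s w x y := by rw [hsymm]
      _ = s w y x := by rw [hanti w x y, neg_neg]
      _ = s y w x := hsymm w y x
      _ = -s y x w := hanti y w x
      _ = -s x y w := by rw [hsymm]
  exact h2.mul_right_eq_zero.mp (by linear_combination hneg)

/-- `D x` stands for the derivative of functions along `x`. -/
def IsMetric (D : V → R → R) (g : V →+ V →+ R) (nabla : V → V → V) : Prop :=
  ∀ x y z, D x (g y z) = g (nabla x y) z + g y (nabla x z)

def curvature (nabla bracket : V → V → V) (x y z : V) : V :=
  nabla x (nabla y z) - nabla y (nabla x z) - nabla (bracket x y) z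

variable {D : V → R → R} {g : V →+ V →+ R} {n₁ n₂ : V → V → V}

theorem IsMetric.apply_eq_of_torsion_eq (h2 : IsUnit (2 : R)) (hg : ∀ x y, g x y = g y x)
    (hm₁ : IsMetric D g n₁) (hm₂ : IsMetric D g n₂)
    (htor : ∀ x y, n₁ x y - n₁ y x = n₂ x y - n₂ y x) (x y w : V) :
    g (n₁ x y) w = g (n₂ x y) w := by
  rw [← sub_eq_zero, ← AddMonoidHom.sub_apply, ← map_sub]
  refine eq_zero_of_symm_of_antisymm h2 (s := fun x y w => g (n₁ x y - n₂ x y) w)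
    (fun x y w => ?_) (fun x y w => ?_) x y w
  · rw [sub_eq_sub_iff_sub_eq_sub.mp (htor x y)]
  · have h := (hm₁ x y w).symm.trans (hm₂ x y w)
    rw [hg y (n₁ x w), hg y (n₂ x w)] at h
    simp only [map_sub, AddMonoidHom.sub_apply]
    linear_combination h

theorem IsMetric.apply_apply_eq (hg : ∀ x y, g x y = g y x)
    (hm₁ : IsMetric D g n₁) (hm₂ : IsMetric D g n₂) (h : ∀ x y w, g (n₁ x y) w = g (n₂ x y) w)
    (x y z u : V) : g (n₁ x (n₁ y z)) u = g (n₂ x (n₂ y z)) u := by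
  have hcross : g (n₁ y z) (n₁ x u) = g (n₂ y z) (n₂ x u) := by rw [h, hg, h, hg]
  linear_combination (hm₂ x (n₂ y z) u) - hm₁ x (n₁ y z) u - hcross
    + congrArg (D x) (h y z u)

theorem IsMetric.curvature_apply_eq (hg : ∀ x y, g x y = g y x)
    (hm₁ : IsMetric D g n₁) (hm₂ : IsMetric D g n₂) (h : ∀ x y w, g (n₁ x y) w = g (n₂ x y) w)
    (bracket : V → V → V) (x y z u : V) :
    g (curvature n₁ bracket x y z) u = g (curvature n₂ bracket x y z) u := by
  simp only [curvature, map_sub, AddMonoidHom.sub_apply, hm₁.apply_apply_eq hg hm₂ h, h]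

theorem curvature_add (N T : V →+ V →+ V) {bracket : V → V → V}
    (htor : ∀ x y, N x y - N y x = bracket x y) (x y z : V) :
    curvature (fun x y => N x y + T x y) bracket x y z = curvature (N · ·) bracket x y z
      + (N x (T y z) - T (N x y) z - T y (N x z)) - (N y (T x z) - T (N y x) z - T x (N y z))
      + (T x (T y z) - T y (T x z)) := by
  simp only [curvature, ← htor, map_add, map_sub, AddMonoidHom.sub_apply]
  abel

end Koszul

section Norden

variable {R V : Type*} [CommRing R] [AddCommGroup V]
  {D : V → R → R} {g : V →+ V →+ R} {J : V →+ V} {N : V →+ V →+ V}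

/-- `covJ N J x y = (∇_x J) y`. -/
def covJ (N : V →+ V →+ V) (J : V →+ V) : V →+ V →+ V := N.compl₂ J - N.compr₂ J

theorem covJ_apply (x y : V) : covJ N J x y = N x (J y) - J (N x y) := rfl

def IsQuasiKaehler (g : V →+ V →+ R) (N : V →+ V →+ V) (J : V →+ V) : Prop :=
  ∀ x y z, g (covJ N J x y) z + g (covJ N J y z) x + g (covJ N J z x) y = 0

/-- `T(x,y) = (∇_x J)(Jy) + (∇_y J)(Jx)`, with `∇̃ = ∇ + T`. -/
def deformTensor (N : V →+ V →+ V) (J : V →+ V) : V →+ V →+ V :=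
  (covJ N J).compl₂ J + ((covJ N J).compl₂ J).flip

theorem deformTensor_apply (x y : V) :
    deformTensor N J x y = covJ N J x (J y) + covJ N J y (J x) := rfl

theorem deformTensor_comm (x y : V) : deformTensor N J x y = deformTensor N J y x := add_comm _ _

theorem apply_J_left_eq (hJJ : ∀ x, J (J x) = -x) (hNorden : ∀ x y, g (J x) (J y) = -g x y)
    (x y : V) : g (J x) y = g x (J y) := by
  simpa only [hJJ, map_neg, neg_inj] using hNorden x (J y)

theorem compl₂_symm_of_apply_J_left_eq (hg : ∀ x y, g x y = g y x)
    (hgJ : ∀ x y, g (J x) y = g x (J y)) (x y : V) : g.compl₂ J x y = g.compl₂ J y x := by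
  rw [AddMonoidHom.compl₂_apply, AddMonoidHom.compl₂_apply, hg, hgJ]

theorem covJ_J (hJJ : ∀ x, J (J x) = -x) (x y : V) : covJ N J x (J y) = -J (covJ N J x y) := by
  simp only [covJ_apply, hJJ, map_neg, map_sub]
  abel

theorem deformTensor_eq_neg_J (hJJ : ∀ x, J (J x) = -x) (x y : V) :
    deformTensor N J x y = -J (covJ N J x y + covJ N J y x) := by
  rw [deformTensor_apply, covJ_J hJJ, covJ_J hJJ, map_add, neg_add]

theorem covJ_symm (hg : ∀ x y, g x y = g y x) (hgJ : ∀ x y, g (J x) y = g x (J y))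
    (hm : IsMetric D g (N · ·)) (x y z : V) : g (covJ N J x y) z = g (covJ N J x z) y := by
  have h := congrArg (D x) (hgJ y z)
  rw [hm, hm] at h
  beta_reduce at h
  rw [hg (J y), hg y] at h
  simp only [covJ_apply, map_sub, AddMonoidHom.sub_apply, hgJ]
  linear_combination h

theorem deformTensor_apply_J (hg : ∀ x y, g x y = g y x) (hJJ : ∀ x, J (J x) = -x)
    (hNorden : ∀ x y, g (J x) (J y) = -g x y) (hm : IsMetric D g (N · ·))
    (hQK : IsQuasiKaehler g N J)
    (y z w : V) :
    g (deformTensor N J y z) (J w) = -g (covJ N J w y) z := by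
  rw [deformTensor_eq_neg_J hJJ, map_neg, AddMonoidHom.neg_apply, hNorden, map_add,
    AddMonoidHom.add_apply, covJ_symm hg (apply_J_left_eq hJJ hNorden) hm z]
  linear_combination hQK y z w

theorem isMetric_add_deformTensor (hg : ∀ x y, g x y = g y x) (hJJ : ∀ x, J (J x) = -x)
    (hNorden : ∀ x y, g (J x) (J y) = -g x y) (hm : IsMetric D g (N · ·))
    (hQK : IsQuasiKaehler g N J) :
    IsMetric D (g.compl₂ J) (fun x y => N x y + deformTensor N J x y) := by
  intro x y w
  have hgJ := apply_J_left_eq hJJ hNorden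
  have hTy := deformTensor_apply_J hg hJJ hNorden hm hQK x y w
  have hTw := deformTensor_apply_J hg hJJ hNorden hm hQK x w y
  have hF := covJ_symm hg hgJ hm w y x
  have hcov : g y (N x (J w)) = g y (J (N x w)) + g (covJ N J x w) y := by
    rw [covJ_apply, map_sub, AddMonoidHom.sub_apply, hg y, hg y]
    ring
  simp only [AddMonoidHom.compl₂_apply, map_add, AddMonoidHom.add_apply, hm x y (J w)]
  rw [hg y (J (deformTensor N J x w)), hgJ]
  linear_combination hcov - hTy - hTw + hQK x w y - hF

theorem covDeriv_deformTensor_apply_J (hg : ∀ x y, g x y = g y x) (hJJ : ∀ x, J (J x) = -x)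
    (hNorden : ∀ x y, g (J x) (J y) = -g x y) (hm : IsMetric D g (N · ·))
    (hQK : IsQuasiKaehler g N J)
    (x y z u : V) :
    g (N x (deformTensor N J y z) - deformTensor N J (N x y) z - deformTensor N J y (N x z)) (J u)
      = -(D x (g (covJ N J u y) z) - g (covJ N J (N x u) y) z - g (covJ N J u (N x y)) z
          - g (covJ N J u y) (N x z)) - g (deformTensor N J y z) (covJ N J x u) := by
  have hT := deformTensor_apply_J hg hJJ hNorden hm hQK
  -- metric compatibility lets `D x` see through the sign in `g(T y z, J u) = -F(u, y, z)`
  have hD : D x (g (deformTensor N J y z) (J u))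
      = -(g (N x (covJ N J u y)) z + g (covJ N J u y) (N x z)) := by
    rw [hT, ← AddMonoidHom.neg_apply, ← map_neg, hm]
    simp only [map_neg, AddMonoidHom.neg_apply]
    ring
  have hcov : g (deformTensor N J y z) (N x (J u))
      = -g (covJ N J (N x u) y) z + g (deformTensor N J y z) (covJ N J x u) := by
    rw [← hT, covJ_apply, map_sub, add_sub_cancel]
  rw [hm] at hD
  simp only [map_sub, AddMonoidHom.sub_apply, hT, hm x (covJ N J u y) z]
  linear_combination hD - hcov

theorem covJ_add_swap_apply_deformTensor (hJJ : ∀ x, J (J x) = -x)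
    (hgJ : ∀ x y, g (J x) y = g x (J y)) (x y z u : V) :
    g (covJ N J y z + covJ N J z y) (deformTensor N J x u)
      = g (deformTensor N J y z) (covJ N J x u + covJ N J u x) := by
  simp only [deformTensor_eq_neg_J hJJ, map_neg, AddMonoidHom.neg_apply, hgJ]

theorem curvature_add_deformTensor_apply_J (hg : ∀ x y, g x y = g y x)
    (hJJ : ∀ x, J (J x) = -x) (hNorden : ∀ x y, g (J x) (J y) = -g x y)
    (hm : IsMetric D g (N · ·))
    (hQK : IsQuasiKaehler g N J)
    {bracket : V → V → V} (htor : ∀ x y, N x y - N y x = bracket x y) (x y z u : V) :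
    g (curvature (fun x y => N x y + deformTensor N J x y) bracket x y z) (J u)
      = g (curvature (N · ·) bracket x y z) (J u)
        - (D x (g (covJ N J u y) z) - g (covJ N J (N x u) y) z - g (covJ N J u (N x y)) z
            - g (covJ N J u y) (N x z))
        + (D y (g (covJ N J u x) z) - g (covJ N J (N y u) x) z - g (covJ N J u (N y x)) z
            - g (covJ N J u x) (N y z))
        - g (covJ N J y z + covJ N J z y) (deformTensor N J x u)
        + g (covJ N J x z + covJ N J z x) (deformTensor N J y u) := by
  have hgJ := apply_J_left_eq hJJ hNorden
  have hx := covDeriv_deformTensor_apply_J hg hJJ hNorden hm hQK x y z u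
  have hy := covDeriv_deformTensor_apply_J hg hJJ hNorden hm hQK y x z u
  have qx := deformTensor_apply_J hg hJJ hNorden hm hQK x (deformTensor N J y z) u
  have qy := deformTensor_apply_J hg hJJ hNorden hm hQK y (deformTensor N J x z) u
  rw [curvature_add N _ htor, covJ_add_swap_apply_deformTensor hJJ hgJ,
    covJ_add_swap_apply_deformTensor hJJ hgJ]
  simp only [map_add, map_sub, AddMonoidHom.add_apply, AddMonoidHom.sub_apply] at hx hy ⊢
  rw [hg (covJ N J u x)] at qx
  rw [hg (covJ N J u y)] at qy
  linear_combination hx - hy + qx - qy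

end Norden

theorem stmt_19
    {R : Type*} [CommRing R] [Algebra ℝ R]
    {V : Type*} [AddCommGroup V] [Module R V]
    (D : V → R → R) (bracket : V → V → V)
    (g : V → V → R) (J : V →ₗ[R] V) (nabla : V → V → V)
    -- `g` is a symmetric bilinear Norden metric, `J` an almost complex structure
    (hg_addl : ∀ x y z, g (x + y) z = g x z + g y z)
    (hg_sym : ∀ x y, g x y = g y x)
    (hJJ : ∀ x, J (J x) = -x)
    (hNorden : ∀ x y, g (J x) (J y) = - g x y)
    -- `nabla` is the Levi-Civita connection of `g`
    (h_add1 : ∀ x y z, nabla (x + y) z = nabla x z + nabla y z)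
    (h_add2 : ∀ x y z, nabla x (y + z) = nabla x y + nabla x z)
    (h_tor : ∀ x y, nabla x y - nabla y x = bracket x y)
    (h_metric : ∀ x y z, D x (g y z) = g (nabla x y) z + g y (nabla x z))
    -- the structural tensor `F(X,Y,Z) = g((∇_X J)Y, Z)`
    (F : V → V → V → R)
    (hF : ∀ x y z, F x y z = g (nabla x (J y) - J (nabla x y)) z)
    -- the associated Norden metric `g̃(X,Y) = g(X,JY)` and its Levi-Civita connection
    (gt : V → V → R) (hgt : ∀ x y, gt x y = g x (J y))
    (nabla' : V → V → V)
    (h'_tor : ∀ x y, nabla' x y - nabla' y x = bracket x y)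
    (h'_metric : ∀ x y z, D x (gt y z) = gt (nabla' x y) z + gt y (nabla' x z))
    (hQK : ∀ x y z, F x y z + F y z x + F z x y = 0)
    -- (0,4)-curvature tensors of `∇` and `∇̃`
    (Rm : V → V → V → V → R)
    (hRm : ∀ x y z u, Rm x y z u
      = g (nabla x (nabla y z) - nabla y (nabla x z) - nabla (bracket x y) z) u)
    (Rt : V → V → V → V → R)
    (hRt : ∀ x y z u, Rt x y z u
      = gt (nabla' x (nabla' y z) - nabla' y (nabla' x z) - nabla' (bracket x y) z) u)
    -- covariant derivative of the (0,3)-tensor `F`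
    (nablaF : V → V → V → V → R)
    (hnF : ∀ x u y z, nablaF x u y z
      = D x (F u y z) - F (nabla x u) y z - F u (nabla x y) z - F u y (nabla x z)) :
    ∀ x y z u,
      Rt x y z u = Rm x y z (J u) - nablaF x u y z + nablaF y u x z
        - g ((nabla y (J z) - J (nabla y z)) + (nabla z (J y) - J (nabla z y)))
            ((nabla x (J (J u)) - J (nabla x (J u))) + (nabla u (J (J x)) - J (nabla u (J x))))
        + g ((nabla x (J z) - J (nabla x z)) + (nabla z (J x) - J (nabla z x)))
            ((nabla y (J (J u)) - J (nabla y (J u))) + (nabla u (J (J y)) - J (nabla u (J y)))) := by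
  intro x y z u
  have h2 : IsUnit (2 : R) := by
    simpa only [map_ofNat] using (IsUnit.mk0 (2 : ℝ) two_ne_zero).map (algebraMap ℝ R)
  let G : V →+ V →+ R := AddMonoidHom.mk₂ g hg_addl fun a b c => by
    rw [hg_sym, hg_addl, hg_sym b, hg_sym c]
  let N : V →+ V →+ V := AddMonoidHom.mk₂ nabla h_add1 h_add2
  let J' : V →+ V := J
  have hm : IsMetric D G (N · ·) := h_metric
  have hm' : IsMetric D (G.compl₂ J') nabla' := fun a b c => by
    have h := h'_metric a b c
    rw [hgt, hgt, hgt] at h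
    exact h
  have hQK' : IsQuasiKaehler G N J' := fun a b c => by
    have h := hQK a b c
    rw [hF, hF, hF] at h
    exact h
  have hT := isMetric_add_deformTensor hg_sym hJJ hNorden hm hQK'
  have hgt_symm := compl₂_symm_of_apply_J_left_eq (g := G) (J := J') hg_sym
    (apply_J_left_eq hJJ hNorden)
  have htor : ∀ a b, nabla' a b - nabla' b a
      = N a b + deformTensor N J' a b - (N b a + deformTensor N J' b a) := fun a b => by
    rw [h'_tor, deformTensor_comm b, add_sub_add_right_eq_sub]
    exact (h_tor a b).symm
  have hpair := hm'.apply_eq_of_torsion_eq h2 hgt_symm hT htor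
  rw [hRt, hgt, hRm, hnF, hnF]
  simp only [hF]
  -- the goal is this chain with `G`, `N`, `J'` unfolded
  exact (hm'.curvature_apply_eq hgt_symm hT hpair bracket x y z u).trans
    (curvature_add_deformTensor_apply_J hg_sym hJJ hNorden hm hQK' h_tor x y z u)
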